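/- arXiv:2511.14240 — 5 statements merged into one kernel-verified Lean document; each statement's English description precedes it below -/
import Mathlib

section
/- Let E be an n×n integer matrix, D = diag(d₁,…,dₙ) a positive diagonal matrix, and set B = D^{-1}(Eᵀ − E) (assumed integral) and Λ₁ = [[0,−D],[D,−DB]]. Let Ẽ be the 2n×n matrix (D^{-1}E; −Iₙ), assumed to have integer entries. Then for all α, β ∈ ℤⁿ one has (Ẽα)ᵀ Λ₁ (Ẽβ) = 0; that is, the bilinear form given by Λ₁ vanishes identically on the column span of Ẽ. -/
/-!
Since `D B = Eᵀ − E`, one gets `Λ₁ Ẽ = (D; Eᵀ)`, and then, `D` being symmetric,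
`Ẽᵀ Λ₁ Ẽ = Eᵀ D⁻¹ D − Eᵀ = 0`.
-/

open Matrix

section

variable {R m : Type*} [CommRing R] [Fintype m]

theorem dotProduct_mulVec_mulVec_eq {n : Type*} [Fintype n] (A : Matrix m n R)
    (M : Matrix m m R) (α β : n → R) :
    (A *ᵥ α) ⬝ᵥ (M *ᵥ (A *ᵥ β)) = α ⬝ᵥ ((Aᵀ * M * A) *ᵥ β) := by
  rw [← vecMul_transpose, ← dotProduct_mulVec, mulVec_mulVec, mulVec_mulVec]

variable [DecidableEq m] {D : Matrix m m R} (E : Matrix m m R)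

theorem fromBlocks_mul_fromRows_inv_mul_eq (hD : IsUnit D.det) :
    fromBlocks 0 (-D) D (-(D * (D⁻¹ * (Eᵀ - E)))) * fromRows (D⁻¹ * E) (-1 : Matrix m m R) =
      fromRows D Eᵀ := by
  rw [fromBlocks_mul_fromRows, mul_nonsing_inv_cancel_left _ _ hD,
    mul_nonsing_inv_cancel_left _ _ hD]
  simp only [zero_mul, neg_mul_neg, mul_one, zero_add, add_sub_cancel]

theorem transpose_fromRows_inv_mul_mul_fromRows (hD : IsUnit D.det) (hDsymm : Dᵀ = D) :
    (fromRows (D⁻¹ * E) (-1 : Matrix m m R))ᵀ * fromRows D Eᵀ = 0 := by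
  rw [transpose_fromRows, fromCols_mul_fromRows, transpose_mul, transpose_nonsing_inv, hDsymm,
    mul_assoc, nonsing_inv_mul _ hD, mul_one, transpose_neg, transpose_one, neg_one_mul,
    add_neg_cancel]

theorem transpose_fromRows_inv_mul_mul_fromBlocks_mul_eq_zero (hD : IsUnit D.det)
    (hDsymm : Dᵀ = D) :
    (fromRows (D⁻¹ * E) (-1 : Matrix m m R))ᵀ *
      fromBlocks 0 (-D) D (-(D * (D⁻¹ * (Eᵀ - E)))) *
      fromRows (D⁻¹ * E) (-1 : Matrix m m R) = 0 := by
  rw [Matrix.mul_assoc, fromBlocks_mul_fromRows_inv_mul_eq E hD,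
    transpose_fromRows_inv_mul_mul_fromRows E hD hDsymm]

end

/-- With `B = D⁻¹(Eᵀ − E)`, `Λ₁ = [[0,−D],[D,−DB]]` and `Ẽ = (D⁻¹E; −Iₙ)`,
the bilinear form given by `Λ₁` vanishes identically on the column span of
`Ẽ`:  `(Ẽα)ᵀ Λ₁ (Ẽβ) = 0` for all `α, β`. -/
theorem lambda_one_vanishes_on_Etilde (n : ℕ) (E : Matrix (Fin n) (Fin n) ℚ)
    (d : Fin n → ℚ) (hd : ∀ i, 0 < d i) (α β : Fin n → ℚ) :
    let D := Matrix.diagonal d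
    let B := D⁻¹ * (Eᵀ - E)
    let Λ₁ := Matrix.fromBlocks (0 : Matrix (Fin n) (Fin n) ℚ) (-D) D (-(D * B))
    let Etil := Matrix.fromRows (D⁻¹ * E) (-(1 : Matrix (Fin n) (Fin n) ℚ))
    (Etil *ᵥ α) ⬝ᵥ (Λ₁ *ᵥ (Etil *ᵥ β)) = 0 := by
  intro D B Λ₁ Etil
  have hD : IsUnit D.det := by
    rw [det_diagonal, isUnit_iff_ne_zero]
    exact Finset.prod_ne_zero_iff.mpr fun i _ => (hd i).ne'
  rw [dotProduct_mulVec_mulVec_eq,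
    transpose_fromRows_inv_mul_mul_fromBlocks_mul_eq_zero E hD (diagonal_transpose d),
    zero_mulVec, dotProduct_zero]
end

section
/- Let E be an invertible n×n matrix over ℚ, D an invertible diagonal matrix, Θ = [[−D^{-1}E, −D^{-1}Eᵀ],[Iₙ, 0]], Γ = [[Eᵀ−E, −Eᵀ−E],[Eᵀ+E, Eᵀ−E]], B̃ = (D^{-1}(Eᵀ−E); Iₙ), and Λ₀ = (Θ^{-1})ᵀ Γ Θ^{-1}. Then B̃ᵀ Λ₀ = (2D | 0). -/
/-!
The matrix Θ turns both factors around Γ into simple block vectors: B̃ = Θ (Iₙ; −Iₙ) and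
(Iₙ | −Iₙ) Γ = (−2E | −2Eᵀ) = (2D | 0) Θ. Hence
B̃ᵀ Λ₀ = (Θ⁻¹ B̃)ᵀ Γ Θ⁻¹ = (Iₙ | −Iₙ) Γ Θ⁻¹ = (2D | 0).
Θ is invertible since its lower blocks are (Iₙ 0) and its upper-right block −D⁻¹Eᵀ is invertible.
-/

open Matrix

section
variable {m R : Type*} [Fintype m] [DecidableEq m] [CommRing R]

theorem isUnit_det_fromBlocks_one_zero (A : Matrix m m R) {B : Matrix m m R}
    (hB : IsUnit B.det) : IsUnit (fromBlocks A B (1 : Matrix m m R) 0).det :=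
  isUnit_det_of_right_inverse (B := fromBlocks 0 1 B⁻¹ (-(B⁻¹ * A))) <| by
    rw [fromBlocks_multiply, ← fromBlocks_one]
    simp [mul_nonsing_inv _ hB, mul_nonsing_inv_cancel_left _ _ hB]

theorem fromBlocks_one_zero_mul_fromRows_one_neg_one (A B : Matrix m m R) :
    fromBlocks A B (1 : Matrix m m R) 0 * fromRows (1 : Matrix m m R) (-1 : Matrix m m R) =
      fromRows (A - B) 1 := by
  rw [fromBlocks_mul_fromRows]
  simp [sub_eq_add_neg]

theorem fromCols_one_neg_one_mul_fromBlocks (P Q S T : Matrix m m R) :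
    fromCols (1 : Matrix m m R) (-1 : Matrix m m R) * fromBlocks P Q S T =
      fromCols (P - S) (Q - T) := by
  rw [fromCols_mul_fromBlocks]
  simp [sub_eq_add_neg]

end

/-- With `Θ = [[−D⁻¹E, −D⁻¹Eᵀ],[Iₙ,0]]`, `Γ = [[Eᵀ−E, −Eᵀ−E],[Eᵀ+E, Eᵀ−E]]`,
`B̃ = (D⁻¹(Eᵀ−E); Iₙ)` and `Λ₀ = (Θ⁻¹)ᵀ Γ Θ⁻¹`, one has `B̃ᵀ Λ₀ = (2D | 0)`. -/
theorem Btilde_transpose_mul_Lambda_zero (n : ℕ) (E : Matrix (Fin n) (Fin n) ℚ)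
    (hE : IsUnit E.det) (d : Fin n → ℚ) (hd : ∀ i, d i ≠ 0) :
    let D := Matrix.diagonal d
    let Θ := Matrix.fromBlocks (-(D⁻¹ * E)) (-(D⁻¹ * Eᵀ))
      (1 : Matrix (Fin n) (Fin n) ℚ) (0 : Matrix (Fin n) (Fin n) ℚ)
    let Γ := Matrix.fromBlocks (Eᵀ - E) (-Eᵀ - E) (Eᵀ + E) (Eᵀ - E)
    let Btil := Matrix.fromRows (D⁻¹ * (Eᵀ - E)) (1 : Matrix (Fin n) (Fin n) ℚ)
    let Λ₀ := (Θ⁻¹)ᵀ * Γ * Θ⁻¹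
    Btilᵀ * Λ₀ = Matrix.fromCols ((2 : ℚ) • D) (0 : Matrix (Fin n) (Fin n) ℚ) := by
  intro D Θ Γ Btil Λ₀
  have hD : IsUnit D.det :=
    (isUnit_iff_isUnit_det D).mp (isUnit_diagonal.mpr (Pi.isUnit_iff.mpr fun i => (hd i).isUnit))
  have hΘ : IsUnit Θ.det := isUnit_det_fromBlocks_one_zero _ <| by
    simpa [det_neg, det_mul, det_transpose] using (isUnit_nonsing_inv_det D hD).mul hE
  have hBtil :
      Btil = Θ * fromRows (1 : Matrix (Fin n) (Fin n) ℚ) (-1 : Matrix (Fin n) (Fin n) ℚ) := by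
    rw [fromBlocks_one_zero_mul_fromRows_one_neg_one, neg_sub_neg, ← mul_sub]
  have hΓ : fromCols (1 : Matrix (Fin n) (Fin n) ℚ) (-1 : Matrix (Fin n) (Fin n) ℚ) * Γ =
      fromCols ((2 : ℚ) • D) (0 : Matrix (Fin n) (Fin n) ℚ) * Θ := by
    rw [fromCols_one_neg_one_mul_fromBlocks, fromCols_mul_fromBlocks]
    simp only [mul_neg, Matrix.smul_mul, mul_nonsing_inv_cancel_left _ _ hD, zero_mul, add_zero]
    congr 1 <;> module
  calc Btilᵀ * Λ₀ = (Θ⁻¹ * Btil : Matrix (Fin n ⊕ Fin n) (Fin n) ℚ)ᵀ * Γ * Θ⁻¹ := by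
        rw [transpose_mul]
        simp only [Λ₀, Matrix.mul_assoc]
    _ = fromCols (1 : Matrix (Fin n) (Fin n) ℚ) (-1 : Matrix (Fin n) (Fin n) ℚ) * Γ * Θ⁻¹ := by
      rw [hBtil, nonsing_inv_mul_cancel_left _ _ hΘ, transpose_fromRows, transpose_one,
        transpose_neg, transpose_one]
    _ = fromCols ((2 : ℚ) • D) 0 := by rw [hΓ, mul_nonsing_inv_cancel_right _ _ hΘ]
end

section
/- With E invertible over ℚ, D invertible diagonal, Λ₂ = ½(Θ^{-1})ᵀΓΘ^{-1} (where Θ, Γ are as in the compatible-pair construction), Ẽ = (D^{-1}E; −Iₙ) and Ẽ' = (D^{-1}Eᵀ; 0): for all α,β ∈ ℚⁿ, (Ẽα)ᵀ Λ₂ (Ẽ'β) = −½(⟨α,β⟩ + ⟨β,α⟩), where ⟨x,y⟩ = xᵀEy. -/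
open Matrix

/-- With `Λ₂ = ½(Θ⁻¹)ᵀΓΘ⁻¹`, `Ẽ = (D⁻¹E; −Iₙ)` and `Ẽ' = (D⁻¹Eᵀ; 0)`:
`(Ẽα)ᵀ Λ₂ (Ẽ'β) = −½(⟨α,β⟩ + ⟨β,α⟩)` where `⟨x,y⟩ = xᵀEy`. -/
theorem Lambda_two_pairing_E_E' (n : ℕ) (E : Matrix (Fin n) (Fin n) ℚ)
    (hE : IsUnit E.det) (d : Fin n → ℚ) (hd : ∀ i, d i ≠ 0) (α β : Fin n → ℚ) :
    let D := Matrix.diagonal d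
    let Θ := Matrix.fromBlocks (-(D⁻¹ * E)) (-(D⁻¹ * Eᵀ))
      (1 : Matrix (Fin n) (Fin n) ℚ) (0 : Matrix (Fin n) (Fin n) ℚ)
    let Γ := Matrix.fromBlocks (Eᵀ - E) (-Eᵀ - E) (Eᵀ + E) (Eᵀ - E)
    let Λ₂ := (1 / 2 : ℚ) • ((Θ⁻¹)ᵀ * Γ * Θ⁻¹)
    let Etil := Matrix.fromRows (D⁻¹ * E) (-(1 : Matrix (Fin n) (Fin n) ℚ))
    let Etil' := Matrix.fromRows (D⁻¹ * Eᵀ) (0 : Matrix (Fin n) (Fin n) ℚ)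
    (Etil *ᵥ α) ⬝ᵥ (Λ₂ *ᵥ (Etil' *ᵥ β)) =
      -(1 / 2 : ℚ) * (α ⬝ᵥ (E *ᵥ β) + β ⬝ᵥ (E *ᵥ α)) := by
  intro D Θ Γ Λ₂ Etil Etil'
  have hDdet : IsUnit D.det := by
    simp only [D, det_diagonal]
    exact (Finset.prod_ne_zero_iff.mpr fun i _ => hd i).isUnit
  have hET : IsUnit Eᵀ.det := by rwa [det_transpose]
  have hDc : (Eᵀ)⁻¹ * D * (D⁻¹ * E) = (Eᵀ)⁻¹ * E := by
    rw [Matrix.mul_assoc, ← Matrix.mul_assoc D, Matrix.mul_nonsing_inv _ hDdet,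
      Matrix.one_mul]
  have hDcT : (Eᵀ)⁻¹ * D * (D⁻¹ * Eᵀ) = 1 := by
    rw [Matrix.mul_assoc, ← Matrix.mul_assoc D, Matrix.mul_nonsing_inv _ hDdet,
      Matrix.one_mul, Matrix.nonsing_inv_mul _ hET]
  have hTR : D⁻¹ * Eᵀ * ((Eᵀ)⁻¹ * E) = D⁻¹ * E := by
    rw [Matrix.mul_assoc, ← Matrix.mul_assoc Eᵀ, Matrix.mul_nonsing_inv _ hET,
      Matrix.one_mul]
  have hTL : D⁻¹ * Eᵀ * ((Eᵀ)⁻¹ * D) = 1 := by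
    rw [Matrix.mul_assoc, ← Matrix.mul_assoc Eᵀ, Matrix.mul_nonsing_inv _ hET,
      Matrix.one_mul, Matrix.nonsing_inv_mul _ hDdet]
  have hinv : Θ⁻¹ = Matrix.fromBlocks (0 : Matrix (Fin n) (Fin n) ℚ)
      (1 : Matrix (Fin n) (Fin n) ℚ) (-((Eᵀ)⁻¹ * D)) (-((Eᵀ)⁻¹ * E)) := by
    apply inv_eq_right_inv
    rw [Matrix.fromBlocks_multiply, ← Matrix.fromBlocks_one]
    simp [neg_mul_neg, hTL, hTR]
  have hu : Θ⁻¹ *ᵥ (Etil *ᵥ α) = Sum.elim (-α) 0 := by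
    rw [hinv]
    simp [Etil, Matrix.fromRows_mulVec, Matrix.fromBlocks_mulVec,
      Matrix.neg_mulVec, Matrix.mulVec_neg, Matrix.mulVec_mulVec, hDc]
  have hv : Θ⁻¹ *ᵥ (Etil' *ᵥ β) = Sum.elim (0 : Fin n → ℚ) (-β) := by
    rw [hinv]
    simp [Etil', Matrix.fromRows_mulVec, Matrix.fromBlocks_mulVec,
      Matrix.neg_mulVec, Matrix.mulVec_neg, Matrix.mulVec_mulVec, hDcT]
  have key : (Etil *ᵥ α) ⬝ᵥ (Λ₂ *ᵥ (Etil' *ᵥ β)) =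
      (1 / 2 : ℚ) * ((Θ⁻¹ *ᵥ (Etil *ᵥ α)) ⬝ᵥ (Γ *ᵥ (Θ⁻¹ *ᵥ (Etil' *ᵥ β)))) := by
    simp only [Λ₂, Matrix.smul_mulVec, dotProduct_smul, smul_eq_mul]
    congr 1
    rw [Matrix.mul_assoc, ← Matrix.mulVec_mulVec, ← Matrix.mulVec_mulVec,
      Matrix.dotProduct_mulVec, Matrix.vecMul_transpose]
  rw [key, hu, hv]
  have hT : α ⬝ᵥ (Eᵀ *ᵥ β) = β ⬝ᵥ (E *ᵥ α) := by
    rw [Matrix.dotProduct_mulVec, Matrix.vecMul_transpose, dotProduct_comm]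
  simp only [Γ, Matrix.fromBlocks_mulVec, Matrix.mulVec_zero, zero_add, add_zero,
    sumElim_dotProduct_sumElim, zero_dotProduct, dotProduct_zero,
    Matrix.mulVec_neg, Matrix.sub_mulVec, Matrix.add_mulVec, Matrix.neg_mulVec,
    dotProduct_neg, neg_dotProduct, dotProduct_add, dotProduct_sub, neg_neg, neg_sub,
    Sum.elim_comp_inl, Sum.elim_comp_inr]
  rw [hT]
  ring
end

section
/- With the same setup (E invertible, D invertible diagonal, Λ₂ = ½(Θ^{-1})ᵀΓΘ^{-1}, Ẽ = (D^{-1}E; −Iₙ)): for all α,β ∈ ℚⁿ, (Ẽα)ᵀ Λ₂ (Ẽβ) = ½(⟨β,α⟩ − ⟨α,β⟩), where ⟨x,y⟩ = xᵀEy. -/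
open Matrix

/-!
Since `Θ` has bottom block row `(1, 0)` and an invertible block `-D⁻¹Eᵀ`, it is invertible, and
`Θ * (-1; 0) = Ẽ`. Hence `Θ⁻¹Ẽ = (-1; 0)`, so the congruence `Ẽᵀ Λ₂ Ẽ` collapses to half the
top-left block `Eᵀ - E` of `Γ`, whose bilinear form is `⟨β,α⟩ - ⟨α,β⟩`.
-/

namespace Matrix

theorem mulVec_dotProduct_mulVec_mulVec {m n R : Type*} [Fintype m] [Fintype n]
    [CommSemiring R] (X : Matrix m n R) (M : Matrix m m R) (a b : n → R) :
    (X *ᵥ a) ⬝ᵥ (M *ᵥ (X *ᵥ b)) = a ⬝ᵥ ((Xᵀ * M * X) *ᵥ b) := by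
  rw [mulVec_mulVec, ← vecMul_transpose, dotProduct_mulVec, vecMul_vecMul,
    ← dotProduct_mulVec, Matrix.mul_assoc]

variable {m n R : Type*} [Fintype n] [DecidableEq n] [CommRing R]

theorem fromBlocks_one_zero_mul_eq_one {A B : Matrix n n R} (hB : IsUnit B.det) :
    fromBlocks A B 1 0 * fromBlocks 0 1 B⁻¹ (-(B⁻¹ * A)) = 1 := by
  simp [fromBlocks_multiply, mul_nonsing_inv _ hB, ← Matrix.mul_assoc, ← fromBlocks_one]

theorem isUnit_det_fromBlocks_one_zero {A B : Matrix n n R} (hB : IsUnit B.det) :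
    IsUnit (fromBlocks A B 1 0).det :=
  isUnit_det_of_right_inverse (fromBlocks_one_zero_mul_eq_one hB)

theorem transpose_mul_congr_inv_mul {Θ : Matrix n n R} (Γ : Matrix n n R) (V : Matrix n m R)
    (hΘ : IsUnit Θ.det) : (Θ * V)ᵀ * ((Θ⁻¹)ᵀ * Γ * Θ⁻¹) * (Θ * V) = Vᵀ * Γ * V := by
  have hV : Θ⁻¹ * (Θ * V) = V := nonsing_inv_mul_cancel_left Θ V hΘ
  calc (Θ * V)ᵀ * ((Θ⁻¹)ᵀ * Γ * Θ⁻¹) * (Θ * V)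
      = (Θ⁻¹ * (Θ * V))ᵀ * Γ * (Θ⁻¹ * (Θ * V)) := by
        simp only [transpose_mul, Matrix.mul_assoc]
    _ = Vᵀ * Γ * V := by rw [hV]

end Matrix

/-- With `Λ₂ = ½(Θ⁻¹)ᵀΓΘ⁻¹` and `Ẽ = (D⁻¹E; −Iₙ)`:
`(Ẽα)ᵀ Λ₂ (Ẽβ) = ½(⟨β,α⟩ − ⟨α,β⟩)` where `⟨x,y⟩ = xᵀEy`. -/
theorem Lambda_two_pairing_E_E (n : ℕ) (E : Matrix (Fin n) (Fin n) ℚ)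
    (hE : IsUnit E.det) (d : Fin n → ℚ) (hd : ∀ i, d i ≠ 0) (α β : Fin n → ℚ) :
    let D := Matrix.diagonal d
    let Θ := Matrix.fromBlocks (-(D⁻¹ * E)) (-(D⁻¹ * Eᵀ))
      (1 : Matrix (Fin n) (Fin n) ℚ) (0 : Matrix (Fin n) (Fin n) ℚ)
    let Γ := Matrix.fromBlocks (Eᵀ - E) (-Eᵀ - E) (Eᵀ + E) (Eᵀ - E)
    let Λ₂ := (1 / 2 : ℚ) • ((Θ⁻¹)ᵀ * Γ * Θ⁻¹)
    let Etil := Matrix.fromRows (D⁻¹ * E) (-(1 : Matrix (Fin n) (Fin n) ℚ))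
    (Etil *ᵥ α) ⬝ᵥ (Λ₂ *ᵥ (Etil *ᵥ β)) =
      (1 / 2 : ℚ) * (β ⬝ᵥ (E *ᵥ α) - α ⬝ᵥ (E *ᵥ β)) := by
  intro D Θ Γ Λ₂ Etil
  have hD : IsUnit D.det := by
    simpa [D, det_diagonal, Finset.prod_ne_zero_iff] using hd
  have hΘ : IsUnit Θ.det := by
    refine isUnit_det_fromBlocks_one_zero ?_
    rw [det_neg, det_mul, det_transpose]
    exact (isUnit_neg_one.pow _).mul ((isUnit_nonsing_inv_det D hD).mul hE)
  set V : Matrix (Fin n ⊕ Fin n) (Fin n) ℚ := fromRows (-1) 0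
  have hEtil : Etil = Θ * V := by
    simp [Θ, Etil, V, fromBlocks_mul_fromRows]
  have hcorner : Vᵀ * Γ * V = Eᵀ - E := by
    simp only [Γ, V, transpose_fromRows, Matrix.mul_assoc, fromBlocks_mul_fromRows,
      fromCols_mul_fromRows]
    simp
  have hpairing : Etilᵀ * Λ₂ * Etil = (1 / 2 : ℚ) • (Eᵀ - E) := by
    rw [← hcorner, hEtil, ← transpose_mul_congr_inv_mul Γ _ hΘ]
    simp only [Λ₂, Matrix.mul_smul, Matrix.smul_mul]
  rw [mulVec_dotProduct_mulVec_mulVec, hpairing, smul_mulVec, dotProduct_smul, sub_mulVec,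
    dotProduct_sub, dotProduct_transpose_mulVec, smul_eq_mul]
end

section
/- Let T be the quantum torus over ℚ(v^{1/2}) with X^e X^f = q^{½Λ₂(e,f)} X^{e+f}, where Λ₂ = ½·M with M the integer matrix with rows (0,1,−1,0), (−1,0,0,−1), (1,0,0,−1), (0,1,1,0). With y₁ = X^{e₃−e₁} + X^{e₂−e₁} and y₂ = X^{e₁+e₄−e₂} + X^{−e₂}, the quantum Serre relation Σ_{t=0}^{2} (−1)ᵗ [2 choose t]_v · y₁^{2−t} y₂ y₁ᵗ = 0 holds; equivalently [y₁,[y₁,y₂]_v]_{v^{-1}} = 0. -/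
open Matrix

/-!
The Serre expression equals the nested `q`-commutator `[y₁, [y₁, y₂]_v]_{v⁻¹}`. Since `M` is
skew-symmetric, monomials `q`-commute: `X^e X^f = v^{M(e,f)} X^f X^e`. Three of the four monomial
`v`-commutators in `[y₁, y₂]_v` vanish, leaving `(v⁻¹ - v) v^{1/2} X^{e₄}`, and both monomials of
`y₁` commute with `X^{e₄}` up to the factor `v⁻¹`, so the outer `v⁻¹`-commutator vanishes.
-/

section QComm

variable {K A : Type*} [CommRing K] [Ring A] [Algebra K A]

def qComm (t : K) (a b : A) : A := a * b - t • (b * a)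

theorem qComm_add_left (t : K) (a a' b : A) :
    qComm t (a + a') b = qComm t a b + qComm t a' b := by
  simp only [qComm, add_mul, mul_add, smul_add]
  abel

theorem qComm_add_right (t : K) (a b b' : A) :
    qComm t a (b + b') = qComm t a b + qComm t a b' := by
  simp only [qComm, add_mul, mul_add, smul_add]
  abel

theorem qComm_smul_right (t c : K) (a b : A) : qComm t a (c • b) = c • qComm t a b := by
  simp only [qComm, mul_smul_comm, smul_mul_assoc, smul_sub, smul_comm t c]

theorem qComm_of_mul_eq_smul_mul {s : K} {a b : A} (h : a * b = s • (b * a)) (t : K) :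
    qComm t a b = (s - t) • (b * a) := by
  rw [qComm, h, sub_smul]

end QComm

theorem serre_eq_qComm_qComm {K A : Type*} [Field K] [Ring A] [Algebra K A] {v : K} (hv : v ≠ 0)
    (a b : A) :
    a ^ 2 * b - (v + v⁻¹) • (a * b * a) + b * a ^ 2 = qComm v⁻¹ a (qComm v a b) := by
  simp only [qComm, pow_two, mul_sub, sub_mul, mul_smul_comm, smul_mul_assoc, smul_sub, smul_smul,
    inv_mul_cancel₀ hv, one_smul, add_smul, mul_assoc]
  abel

theorem dotProduct_mulVec_swap_of_transpose_eq_neg {ι R : Type*} [Fintype ι] [CommRing R]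
    {M : Matrix ι ι R} (hM : Mᵀ = -M) (e f : ι → R) :
    f ⬝ᵥ (M *ᵥ e) = -(e ⬝ᵥ (M *ᵥ f)) := by
  rw [dotProduct_mulVec, dotProduct_comm, ← mulVec_transpose, hM, neg_mulVec, dotProduct_neg]

section QuantumTorus

variable {ι K T : Type*} [Fintype ι] [Field K] [Ring T] [Algebra K T] {M : Matrix ι ι ℤ}
  {w : K} {X : (ι → ℤ) → T}

theorem quantumTorus_mul_comm (hM : Mᵀ = -M) (hw : w ≠ 0)
    (hX : ∀ e f, X e * X f = w ^ (e ⬝ᵥ (M *ᵥ f)) • X (e + f)) (e f : ι → ℤ) :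
    X e * X f = (w ^ 2) ^ (e ⬝ᵥ (M *ᵥ f)) • (X f * X e) := by
  rw [hX f e, smul_smul, dotProduct_mulVec_swap_of_transpose_eq_neg hM e f, add_comm, hX,
    ← zpow_natCast, ← _root_.zpow_mul, ← zpow_add₀ hw]
  congr 2
  push_cast
  ring

theorem quantumTorus_qComm (hM : Mᵀ = -M) (hw : w ≠ 0)
    (hX : ∀ e f, X e * X f = w ^ (e ⬝ᵥ (M *ᵥ f)) • X (e + f)) (t : K) (e f : ι → ℤ) :
    qComm t (X e) (X f) = (((w ^ 2) ^ (e ⬝ᵥ (M *ᵥ f)) - t) * w ^ (-(e ⬝ᵥ (M *ᵥ f)))) • X (e + f) := by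
  rw [qComm_of_mul_eq_smul_mul (quantumTorus_mul_comm hM hw hX e f), hX,
    dotProduct_mulVec_swap_of_transpose_eq_neg hM e f, add_comm, mul_smul]

theorem quantumTorus_serre (hM : Mᵀ = -M) (hw : w ≠ 0)
    (hX : ∀ e f, X e * X f = w ^ (e ⬝ᵥ (M *ᵥ f)) • X (e + f)) {α β γ δ : ι → ℤ}
    (hαγ : α ⬝ᵥ (M *ᵥ γ) = 1) (hαδ : α ⬝ᵥ (M *ᵥ δ) = 1) (hβδ : β ⬝ᵥ (M *ᵥ δ) = 1)
    (hβγ : β ⬝ᵥ (M *ᵥ γ) = -1) (hα : α ⬝ᵥ (M *ᵥ (β + γ)) = -1)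
    (hβ : β ⬝ᵥ (M *ᵥ (β + γ)) = -1) :
    (X α + X β) ^ 2 * (X γ + X δ) - (w ^ 2 + (w ^ 2)⁻¹) • ((X α + X β) * (X γ + X δ) * (X α + X β))
      + (X γ + X δ) * (X α + X β) ^ 2 = 0 := by
  have hz : qComm (w ^ 2) (X α + X β) (X γ + X δ) = (((w ^ 2)⁻¹ - w ^ 2) * w) • X (β + γ) := by
    simp only [qComm_add_left, qComm_add_right, quantumTorus_qComm hM hw hX, hαγ, hαδ, hβδ, hβγ,
      zpow_one, _root_.zpow_neg_one, neg_neg, sub_self, zero_mul, zero_smul, zero_add, add_zero]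
  have h0 : qComm (w ^ 2)⁻¹ (X α + X β) (X (β + γ)) = 0 := by
    simp only [qComm_add_left, quantumTorus_qComm hM hw hX, hα, hβ, _root_.zpow_neg_one, sub_self,
      zero_mul, zero_smul, add_zero]
  rw [serre_eq_qComm_qComm (pow_ne_zero 2 hw), hz, qComm_smul_right, h0, smul_zero]

end QuantumTorus

/-- The quantum Serre relation in the `A₂` quantum torus with the compatible
pair `(Λ₂, B̃)`, `Λ₂ = ½M`: with `X^e X^f = q^{½Λ₂(e,f)} X^{e+f} = w^{M(e,f)} X^{e+f}`
(`w = v^{1/2}`, `q = v²`), one has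
`Σ_{t=0}^{2} (−1)ᵗ [2 choose t]_v y₁^{2−t} y₂ y₁ᵗ = 0`. -/
theorem quantum_serre_relation_A2 {K T : Type*} [Field K] [Ring T] [Algebra K T]
    (v w : K) (hw : w ≠ 0) (hv : v = w ^ 2) (X : (Fin 4 → ℤ) → T)
    (hX : ∀ e f : Fin 4 → ℤ,
      X e * X f =
        (w ^ (e ⬝ᵥ ((!![0,1,-1,0; -1,0,0,-1; 1,0,0,-1; 0,1,1,0] :
          Matrix (Fin 4) (Fin 4) ℤ) *ᵥ f))) • X (e + f)) :
    let y₁ := X ![-1, 0, 1, 0] + X ![-1, 1, 0, 0]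
    let y₂ := X ![1, -1, 0, 1] + X ![0, -1, 0, 0]
    y₁ ^ 2 * y₂ - (v + v⁻¹) • (y₁ * y₂ * y₁) + y₂ * y₁ ^ 2 = 0 := by
  subst hv
  exact quantumTorus_serre (by decide) hw hX (by decide) (by decide) (by decide) (by decide)
    (by decide) (by decide)
end
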